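/- Let R be a GCD domain and let A and B be m × n matrices over R, both in Smith normal form. Then A and B are equivalent (i.e. B = U A V for some invertible square matrices U, V over R) if and only if for each index i the diagonal entries A i i and B i i are associates (each divides the other). -/
import Mathlib


/-- A rectangular matrix is in Smith normal form if all off-diagonal entries vanish
and each diagonal entry divides the next one. -/
def IsSmithNormalForm {R : Type} [CommRing R] {m n : ℕ}
    (B : Matrix (Fin m) (Fin n) R) : Prop :=
  (∀ (i : Fin m) (j : Fin n), (i : ℕ) ≠ (j : ℕ) → B i j = 0) ∧
  (∀ (i : ℕ) (hm : i + 1 < m) (hn : i + 1 < n),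
    B ⟨i, by omega⟩ ⟨i, by omega⟩ ∣ B ⟨i + 1, hm⟩ ⟨i + 1, hn⟩)

namespace SNFAux
open Matrix

variable {R : Type} [CommRing R] {m n : ℕ}

/-- The diagonal sequence of a rectangular matrix, extended by zero. -/
def diagSeq (A : Matrix (Fin m) (Fin n) R) (i : ℕ) : R :=
  if h : i < m ∧ i < n then A ⟨i, h.1⟩ ⟨i, h.2⟩ else 0

lemma diagSeq_chain {A : Matrix (Fin m) (Fin n) R} (hA : IsSmithNormalForm A) :
    ∀ (j i : ℕ), i ≤ j → diagSeq A i ∣ diagSeq A j := by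
  intro j
  induction j with
  | zero =>
    intro i hi
    interval_cases i
    exact dvd_rfl
  | succ j ih =>
    intro i hi
    rcases Nat.lt_or_ge i (j + 1) with h | h
    · refine (ih i (by omega)).trans ?_
      by_cases hj : j + 1 < m ∧ j + 1 < n
      · have hd := hA.2 j hj.1 hj.2
        simp only [diagSeq, dif_pos hj,
          dif_pos (show j < m ∧ j < n from ⟨by omega, by omega⟩)]
        exact hd
      · simp only [diagSeq, dif_neg hj]
        exact dvd_zero _
    · have : i = j + 1 := by omega
      subst this
      exact dvd_rfl

lemma prod_dvd_of_inj (a : ℕ → R) (hchain : ∀ i j : ℕ, i ≤ j → a i ∣ a j) :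
    ∀ {k : ℕ} (g : Fin k → ℕ), Function.Injective g →
      (∏ i : Fin k, a i) ∣ ∏ i : Fin k, a (g i) := by
  intro k
  induction k with
  | zero => simp
  | succ k ih =>
    intro g hg
    obtain ⟨i₀, -, hmax⟩ :=
      Finset.exists_max_image Finset.univ g ⟨0, Finset.mem_univ 0⟩
    have hk : k ≤ g i₀ := by
      have h1 : (Finset.univ.image g).card = k + 1 := by
        rw [Finset.card_image_of_injective _ hg, Finset.card_univ, Fintype.card_fin]
      have h2 : Finset.univ.image g ⊆ Finset.range (g i₀ + 1) := by
        intro x hx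
        obtain ⟨i, -, rfl⟩ := Finset.mem_image.mp hx
        exact Finset.mem_range.mpr (Nat.lt_succ_of_le (hmax i (Finset.mem_univ i)))
      have := Finset.card_le_card h2
      rw [h1, Finset.card_range] at this
      omega
    have hinj : Function.Injective (fun i : Fin k => g (i₀.succAbove i)) := by
      intro i j hij
      exact Fin.succAbove_right_injective (hg hij)
    calc (∏ i : Fin (k + 1), a i)
        = (∏ i : Fin k, a i) * a k := by
          rw [Fin.prod_univ_castSucc]
          simp
      _ ∣ (∏ i : Fin k, a (g (i₀.succAbove i))) * a (g i₀) :=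
          mul_dvd_mul (ih _ hinj) (hchain _ _ hk)
      _ = ∏ i : Fin (k + 1), a (g i) := by
          rw [Fin.prod_univ_succAbove (fun i => a (g i)) i₀, mul_comm]

lemma snf_minor {A : Matrix (Fin m) (Fin n) R} (hA : IsSmithNormalForm A)
    {k : ℕ} (S : Fin k → Fin m) (T : Fin k → Fin n) :
    (∏ i : Fin k, diagSeq A i) ∣ (A.submatrix S T).det := by
  by_cases hS : Function.Injective S
  · rw [Matrix.det_apply]
    refine Finset.dvd_sum fun σ _ => ?_
    by_cases hσ : ∀ i : Fin k, ((S (σ i) : ℕ)) = (T i : ℕ)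
    · have hTm : ∀ i : Fin k, (T i : ℕ) < m := fun i => hσ i ▸ (S (σ i)).isLt
      have hprod : (∏ i, A.submatrix S T (σ i) i) = ∏ i : Fin k, diagSeq A (T i) := by
        refine Finset.prod_congr rfl fun i _ => ?_
        have h1 : S (σ i) = ⟨(T i : ℕ), hTm i⟩ := Fin.ext (hσ i)
        rw [Matrix.submatrix_apply, h1, diagSeq, dif_pos ⟨hTm i, (T i).isLt⟩]
      have hginj : Function.Injective fun i : Fin k => ((T i : ℕ)) := by
        intro i j hij
        have : S (σ i) = S (σ j) := Fin.ext (by rw [hσ i, hσ j]; exact hij)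
        exact σ.injective (hS this)
      have hdvd := prod_dvd_of_inj (diagSeq A)
        (fun i j h => diagSeq_chain hA j i h) _ hginj
      rw [Units.smul_def, zsmul_eq_mul]
      exact Dvd.dvd.mul_left (hprod ▸ hdvd) _
    · push_neg at hσ
      obtain ⟨i, hi⟩ := hσ
      have hzero : (∏ i, A.submatrix S T (σ i) i) = 0 :=
        Finset.prod_eq_zero (Finset.mem_univ i) (hA.1 _ _ hi)
      rw [hzero, smul_zero]
      exact dvd_zero _
  · obtain ⟨i, j, hij, hne⟩ := Function.not_injective_iff.mp hS
    rw [Matrix.det_zero_of_row_eq hne (by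
      funext l
      simp [Matrix.submatrix_apply, hij])]
    exact dvd_zero _

lemma minor_dvd_mul_left {d : R} {A : Matrix (Fin m) (Fin n) R} {k : ℕ}
    (h : ∀ (S : Fin k → Fin m) (T : Fin k → Fin n), d ∣ (A.submatrix S T).det)
    (U : Matrix (Fin m) (Fin m) R) (S : Fin k → Fin m) (T : Fin k → Fin n) :
    d ∣ ((U * A).submatrix S T).det := by
  classical
  have hrw : ((U * A).submatrix S T).det
      = Matrix.detRowAlternating
          (fun i => ∑ l : Fin m, U (S i) l • (fun j => A l (T j))) := by
    show Matrix.detRowAlternating _ = _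
    congr 1
    funext i j
    simp [Matrix.mul_apply, Finset.sum_apply]
  rw [hrw]
  have hsum := (Matrix.detRowAlternating (R := R) (n := Fin k)).toMultilinearMap.map_sum
    (g := fun (i : Fin k) (l : Fin m) => U (S i) l • (fun j => A l (T j)))
  rw [show (Matrix.detRowAlternating
      (fun i => ∑ l : Fin m, U (S i) l • (fun j : Fin k => A l (T j))) : R)
      = (Matrix.detRowAlternating (R := R) (n := Fin k)).toMultilinearMap
          (fun i => ∑ l : Fin m, U (S i) l • (fun j : Fin k => A l (T j))) from rfl,
    hsum]
  refine Finset.dvd_sum fun r _ => ?_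
  rw [MultilinearMap.map_smul_univ]
  rw [smul_eq_mul]
  refine Dvd.dvd.mul_left ?_ _
  exact h r T

lemma minor_dvd_mul_right {d : R} {A : Matrix (Fin m) (Fin n) R} {k : ℕ}
    (h : ∀ (S : Fin k → Fin m) (T : Fin k → Fin n), d ∣ (A.submatrix S T).det)
    (V : Matrix (Fin n) (Fin n) R) (S : Fin k → Fin m) (T : Fin k → Fin n) :
    d ∣ ((A * V).submatrix S T).det := by
  have h' : ∀ (S' : Fin k → Fin n) (T' : Fin k → Fin m),
      d ∣ ((Aᵀ).submatrix S' T').det := by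
    intro S' T'
    rw [← Matrix.det_transpose, Matrix.transpose_submatrix, Matrix.transpose_transpose]
    exact h T' S'
  have := minor_dvd_mul_left h' Vᵀ T S
  rwa [← Matrix.transpose_mul, ← Matrix.transpose_submatrix,
    Matrix.det_transpose] at this

lemma prod_dvd_of_equiv {A B : Matrix (Fin m) (Fin n) R}
    (hA : IsSmithNormalForm A) (hB : IsSmithNormalForm B)
    {U : Matrix (Fin m) (Fin m) R} {V : Matrix (Fin n) (Fin n) R}
    (hUAV : B = U * A * V) {k : ℕ} (hkm : k ≤ m) (hkn : k ≤ n) :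
    (∏ i : Fin k, diagSeq A i) ∣ ∏ i : Fin k, diagSeq B i := by
  have h1 : ∀ (S : Fin k → Fin m) (T : Fin k → Fin n),
      (∏ i : Fin k, diagSeq A i) ∣ (A.submatrix S T).det := fun S T => snf_minor hA S T
  have h2 := minor_dvd_mul_right (minor_dvd_mul_left h1 U) V
    (Fin.castLE hkm) (Fin.castLE hkn)
  rw [← hUAV] at h2
  have h3 : B.submatrix (Fin.castLE hkm) (Fin.castLE hkn)
      = Matrix.diagonal (fun i : Fin k => diagSeq B i) := by
    ext i j
    by_cases hij : i = j
    · subst hij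
      rw [Matrix.diagonal_apply_eq, Matrix.submatrix_apply, diagSeq,
        dif_pos ⟨lt_of_lt_of_le i.isLt hkm, lt_of_lt_of_le i.isLt hkn⟩]
      rfl
    · rw [Matrix.diagonal_apply_ne _ hij, Matrix.submatrix_apply]
      exact hB.1 _ _ (fun hv => hij (Fin.ext hv))
  rw [h3, Matrix.det_diagonal] at h2
  exact h2

end SNFAux

open SNFAux in
/-- Two `m × n` matrices in Smith normal form over a GCD domain are equivalent
if and only if corresponding diagonal elements are associates. -/
theorem smith_normal_form_equivalent_iff_associated
    {R : Type} [CommRing R] [IsDomain R] [GCDMonoid R]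
    {m n : ℕ} (A B : Matrix (Fin m) (Fin n) R)
    (hA : IsSmithNormalForm A) (hB : IsSmithNormalForm B) :
    (∃ (U : Matrix (Fin m) (Fin m) R) (V : Matrix (Fin n) (Fin n) R),
        IsUnit U.det ∧ IsUnit V.det ∧ B = U * A * V) ↔
      (∀ (i : ℕ) (hm : i < m) (hn : i < n),
        Associated (A ⟨i, hm⟩ ⟨i, hn⟩) (B ⟨i, hm⟩ ⟨i, hn⟩)) := by
  constructor
  · rintro ⟨U, V, hU, hV, hUAV⟩
    have hBA : A = U⁻¹ * B * V⁻¹ := by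
      rw [hUAV]
      calc A = (U⁻¹ * U) * A * (V * V⁻¹) := by
            rw [Matrix.nonsing_inv_mul U hU, Matrix.mul_nonsing_inv V hV,
              Matrix.one_mul, Matrix.mul_one]
        _ = U⁻¹ * (U * A * V) * V⁻¹ := by simp only [Matrix.mul_assoc]
    have hassoc : ∀ k : ℕ, k ≤ m → k ≤ n →
        Associated (∏ i : Fin k, diagSeq A i) (∏ i : Fin k, diagSeq B i) :=
      fun k h1 h2 => associated_of_dvd_dvd
        (prod_dvd_of_equiv hA hB hUAV h1 h2)
        (prod_dvd_of_equiv hB hA hBA h1 h2)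
    intro i hm hn
    have e1 := hassoc i (le_of_lt hm) (le_of_lt hn)
    have e2 := hassoc (i + 1) hm hn
    rw [Fin.prod_univ_castSucc (f := fun j : Fin (i + 1) => diagSeq A j),
      Fin.prod_univ_castSucc (f := fun j : Fin (i + 1) => diagSeq B j)] at e2
    simp only [Fin.coe_castSucc, Fin.val_last] at e2
    have hdA : diagSeq A i = A ⟨i, hm⟩ ⟨i, hn⟩ := dif_pos ⟨hm, hn⟩
    have hdB : diagSeq B i = B ⟨i, hm⟩ ⟨i, hn⟩ := dif_pos ⟨hm, hn⟩
    rw [hdA, hdB] at e2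
    by_cases hp : (∏ j : Fin i, diagSeq A j) = 0
    · have hq : (∏ j : Fin i, diagSeq B j) = 0 := by
        obtain ⟨u, hu⟩ := e1
        rw [← hu, hp, zero_mul]
      obtain ⟨jA, -, hjA⟩ := Finset.prod_eq_zero_iff.mp hp
      obtain ⟨jB, -, hjB⟩ := Finset.prod_eq_zero_iff.mp hq
      have hA0 : A ⟨i, hm⟩ ⟨i, hn⟩ = 0 := by
        rw [← hdA]
        exact zero_dvd_iff.mp (hjA ▸ diagSeq_chain hA i jA (le_of_lt jA.isLt))
      have hB0 : B ⟨i, hm⟩ ⟨i, hn⟩ = 0 := by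
        rw [← hdB]
        exact zero_dvd_iff.mp (hjB ▸ diagSeq_chain hB i jB (le_of_lt jB.isLt))
      rw [hA0, hB0]
    · exact Associated.of_mul_left e2 e1 hp
  · intro h
    choose u hu using h
    refine ⟨Matrix.diagonal (fun i : Fin m =>
      if h : (i : ℕ) < n then (u (i : ℕ) i.isLt h : R) else 1), 1, ?_, ?_, ?_⟩
    · rw [Matrix.det_diagonal]
      refine Finset.prod_induction _ IsUnit (fun _ _ => IsUnit.mul) isUnit_one
        fun x _ => ?_
      by_cases hx : (x : ℕ) < n
      · rw [dif_pos hx]; exact (u (x : ℕ) x.isLt hx).isUnit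
      · rw [dif_neg hx]; exact isUnit_one
    · simp
    · ext i j
      rw [Matrix.mul_one, Matrix.diagonal_mul]
      by_cases hij : (i : ℕ) = (j : ℕ)
      · have hin : (i : ℕ) < n := hij ▸ j.isLt
        rw [dif_pos hin]
        have hj : j = ⟨(i : ℕ), hin⟩ := Fin.ext hij.symm
        have hAij : A i j = A ⟨(i : ℕ), i.isLt⟩ ⟨(i : ℕ), hin⟩ := by
          congr 1
        have hBij : B i j = B ⟨(i : ℕ), i.isLt⟩ ⟨(i : ℕ), hin⟩ := by
          congr 1
        rw [hAij, hBij, mul_comm]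
        exact (hu (i : ℕ) i.isLt hin).symm
      · rw [hB.1 i j hij, hA.1 i j hij, mul_zero]
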